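/- arXiv:2110.13905 — 3 statements merged into one kernel-verified Lean document; each statement's English description precedes it below -/
import Mathlib

section
/- Suppose the dataset {(x_i, y_i)} satisfies the symmetry condition y_i φ(⟨u_1, x_i⟩) − y_i φ(−⟨u_2, x_i⟩) ≥ 1 for all i, where the dataset contains with every point (x, y) also the point (−x, −y). Then for every i and all Clarke subderivatives h_i ∈ ∂°φ(⟨u_1, x_i⟩) and g_i ∈ ∂°φ(−⟨u_2, x_i⟩), we have y_i (h_i ⟨u_2, x_i⟩ + g_i ⟨u_1, x_i⟩) ≥ 1. -/
/-!
Write `a = ⟨u₁, xᵢ⟩`, `b = ⟨u₂, xᵢ⟩` and `F(a, b) = φ(a) − φ(−b)`. By symmetry of the dataset the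
margin at the mirrored point `−xᵢ` is `yᵢ F(b, a) ≥ 1`, and replacing `(a, b)` by `(−b, −a)`
reduces to `yᵢ = 1`. Since `φ` has the sign of its argument, `F(a, b) ≥ 1` forces `a > 0` or
`b > 0`; the sign pattern of `(a, −b)` then pins down the subderivatives enough to bound `h b + g a`
below by `F(a, b)` or by `F(b, a)`.
-/

open Finset

/-- Clarke subdifferential of the Leaky ReLU `φ(z) = max{z, αz}`. -/
def clarkeLeaky (α z : ℝ) : Set ℝ :=
  if 0 < z then {1} else if z < 0 then {α} else Set.Icc α 1

def leakyRelu (α z : ℝ) : ℝ := max z (α * z)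

section LeakyRelu

variable {α z h : ℝ}

lemma leakyRelu_of_nonneg (hα1 : α ≤ 1) (hz : 0 ≤ z) : leakyRelu α z = z :=
  max_eq_left (by nlinarith)

lemma leakyRelu_of_nonpos (hα1 : α ≤ 1) (hz : z ≤ 0) : leakyRelu α z = α * z :=
  max_eq_right (by nlinarith)

lemma eq_one_of_mem_clarkeLeaky_of_pos (hz : 0 < z) (hh : h ∈ clarkeLeaky α z) : h = 1 := by
  simpa [clarkeLeaky, hz] using hh

lemma eq_of_mem_clarkeLeaky_of_neg (hz : z < 0) (hh : h ∈ clarkeLeaky α z) : h = α := by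
  simpa [clarkeLeaky, hz, hz.not_gt] using hh

lemma mem_Icc_of_mem_clarkeLeaky (hα1 : α ≤ 1) (hh : h ∈ clarkeLeaky α z) : h ∈ Set.Icc α 1 := by
  unfold clarkeLeaky at hh
  split_ifs at hh with hpos hneg
  · rw [Set.mem_singleton_iff.mp hh]
    exact ⟨hα1, le_rfl⟩
  · rw [Set.mem_singleton_iff.mp hh]
    exact ⟨le_rfl, hα1⟩
  · exact hh

end LeakyRelu

section Margin

variable {α a b h g : ℝ}

lemma one_le_mixed_of_margins (hα : 0 ≤ α) (hα1 : α ≤ 1)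
    (hh : h ∈ clarkeLeaky α a) (hg : g ∈ clarkeLeaky α (-b))
    (hab : 1 ≤ leakyRelu α a - leakyRelu α (-b)) (hba : 1 ≤ leakyRelu α b - leakyRelu α (-a)) :
    1 ≤ h * b + g * a := by
  have ha_or_hb : 0 < a ∨ 0 < b := by
    by_contra! hnonpos
    rw [leakyRelu_of_nonpos hα1 hnonpos.1, leakyRelu_of_nonneg hα1 (by linarith)] at hab
    nlinarith
  rcases ha_or_hb with ha | hb
  · obtain rfl := eq_one_of_mem_clarkeLeaky_of_pos ha hh
    rcases lt_or_ge b 0 with hb | hb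
    · obtain rfl := eq_one_of_mem_clarkeLeaky_of_pos (neg_pos.mpr hb) hg
      rw [leakyRelu_of_nonneg hα1 ha.le, leakyRelu_of_nonneg hα1 (by linarith)] at hab
      linarith
    · have hαg : α * a ≤ g * a :=
        mul_le_mul_of_nonneg_right (mem_Icc_of_mem_clarkeLeaky hα1 hg).1 ha.le
      rw [leakyRelu_of_nonneg hα1 hb, leakyRelu_of_nonpos hα1 (by linarith)] at hba
      linarith
  · rcases le_or_gt a 0 with ha | ha
    · rw [eq_of_mem_clarkeLeaky_of_neg (neg_neg_iff_pos.mpr hb) hg]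
      have hαh : α * b ≤ h * b :=
        mul_le_mul_of_nonneg_right (mem_Icc_of_mem_clarkeLeaky hα1 hh).1 hb.le
      rw [leakyRelu_of_nonpos hα1 ha, leakyRelu_of_nonpos hα1 (by linarith)] at hab
      linarith
    · obtain rfl := eq_one_of_mem_clarkeLeaky_of_pos ha hh
      rw [eq_of_mem_clarkeLeaky_of_neg (neg_neg_iff_pos.mpr hb) hg]
      rw [leakyRelu_of_nonneg hα1 hb.le, leakyRelu_of_nonpos hα1 (by linarith)] at hba
      linarith

lemma one_le_label_mul_mixed {y : ℝ} (hα : 0 ≤ α) (hα1 : α ≤ 1) (hy : y = 1 ∨ y = -1)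
    (hh : h ∈ clarkeLeaky α a) (hg : g ∈ clarkeLeaky α (-b))
    (hab : 1 ≤ y * (leakyRelu α a - leakyRelu α (-b)))
    (hba : 1 ≤ -y * (leakyRelu α (-a) - leakyRelu α b)) :
    1 ≤ y * (h * b + g * a) := by
  rcases hy with rfl | rfl
  · rw [one_mul]
    exact one_le_mixed_of_margins hα hα1 hh hg (by linarith) (by linarith)
  · rw [← neg_neg a] at hh
    have := one_le_mixed_of_margins hα hα1 hg hh (by rw [neg_neg]; linarith)
      (by rw [neg_neg]; linarith)
    linarith

end Margin

/-- On a symmetric dataset, if `y_i (φ(⟨u₁,x_i⟩) − φ(−⟨u₂,x_i⟩)) ≥ 1` for all `i`,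
then for all Clarke subderivatives `h_i ∈ ∂°φ(⟨u₁,x_i⟩)` and `g_i ∈ ∂°φ(−⟨u₂,x_i⟩)`,
`y_i (h_i ⟨u₂,x_i⟩ + g_i ⟨u₁,x_i⟩) ≥ 1`. -/
theorem stmt_7 (d n : ℕ) (α : ℝ) (hα : 0 < α) (hα1 : α < 1)
    (φ : ℝ → ℝ) (hφ : ∀ z, φ z = max z (α * z))
    (x : Fin n → EuclideanSpace ℝ (Fin d)) (y : Fin n → ℝ)
    (hy : ∀ i, y i = 1 ∨ y i = -1)
    (σ : Equiv.Perm (Fin n))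
    (hxσ : ∀ i, x (σ i) = - x i) (hyσ : ∀ i, y (σ i) = - y i)
    (u1 u2 : EuclideanSpace ℝ (Fin d))
    (hmargin : ∀ j, (1 : ℝ) ≤ y j * (φ (inner ℝ u1 (x j)) - φ (-(inner ℝ u2 (x j) : ℝ)))) :
    ∀ i, ∀ h ∈ clarkeLeaky α (inner ℝ u1 (x i)), ∀ g ∈ clarkeLeaky α (-(inner ℝ u2 (x i) : ℝ)),
      (1 : ℝ) ≤ y i * (h * inner ℝ u2 (x i) + g * inner ℝ u1 (x i)) := by
  intro i h hh g hg
  obtain rfl : φ = leakyRelu α := funext hφ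
  have hmirror := hmargin (σ i)
  rw [hxσ, hyσ, inner_neg_right, inner_neg_right, neg_neg] at hmirror
  exact one_le_label_mul_mixed hα.le hα1.le (hy i) hh hg (hmargin i) hmirror
end

section
/- For a linearly separable dataset, Assumption (cone inclusion) ⟨μ, y_i x_i⟩ > ((1−α)/(nα)) Σ_{j∈[n]} max{−⟨y_i x_i, y_j x_j⟩, 0} for all i (where μ = (1/n) Σ_j y_j x_j) is equivalent to the inclusion K ⊆ int(C), where K = {λ Σ_i α_i y_i x_i : α_i ∈ [α, 1], λ > 0} and C = {w ≠ 0 : ⟨w, y_i x_i⟩ ≥ 0 ∀i} with interior int(C) = {w : ⟨w, y_i x_i⟩ > 0 ∀i}. -/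
open Finset

/-!
Write `z i = y i • x i` and `a i j = ⟪z i, z j⟫`. Since `⟪λ • ∑ c j • z j, z i⟫ = λ ∑ c j a i j`,
the inclusion `K ⊆ int C` says that `∑ c j a i j > 0` for every `i` and every weight vector
`c ∈ [α, 1]ⁿ`. This linear function of `c` is minimised at the corner `c j = α` where
`a i j ≥ 0` and `c j = 1` where `a i j < 0`, with minimum
`α ∑ a i j - (1 - α) ∑ max (-a i j) 0`; multiplied by `1 / (n α)`, its positivity is the
cone assumption.
-/

section BoxMinimum

variable {ι : Type*} [Fintype ι] {α : ℝ}

lemma mul_sub_mul_max_neg_le_mul {a c : ℝ} (hc : c ∈ Set.Icc α 1) :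
    α * a - (1 - α) * max (-a) 0 ≤ c * a := by
  rcases le_or_gt 0 a with ha | ha
  · rw [max_eq_right (by linarith)]
    nlinarith [hc.1]
  · rw [max_eq_left (by linarith)]
    nlinarith [hc.2]

lemma sum_mul_sub_sum_max_neg_le_sum_mul (a : ι → ℝ) {c : ι → ℝ}
    (hc : ∀ j, c j ∈ Set.Icc α 1) :
    α * ∑ j, a j - (1 - α) * ∑ j, max (-a j) 0 ≤ ∑ j, c j * a j := by
  rw [mul_sum, mul_sum, ← sum_sub_distrib]
  exact sum_le_sum fun j _ => mul_sub_mul_max_neg_le_mul (hc j)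

lemma exists_mem_Icc_sum_mul_eq (hα1 : α ≤ 1) (a : ι → ℝ) :
    ∃ c : ι → ℝ, (∀ j, c j ∈ Set.Icc α 1) ∧
      ∑ j, c j * a j = α * ∑ j, a j - (1 - α) * ∑ j, max (-a j) 0 := by
  refine ⟨fun j => if 0 ≤ a j then α else 1, fun j => ?_, ?_⟩
  · dsimp only
    split_ifs
    exacts [⟨le_rfl, hα1⟩, ⟨hα1, le_rfl⟩]
  · rw [mul_sum, mul_sum, ← sum_sub_distrib]
    refine sum_congr rfl fun j _ => ?_
    dsimp only
    split_ifs with h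
    · rw [max_eq_right (by linarith)]; ring
    · rw [max_eq_left (by linarith)]; ring

theorem forall_mem_Icc_sum_mul_pos_iff (hα1 : α ≤ 1) (a : ι → ℝ) :
    (∀ c : ι → ℝ, (∀ j, c j ∈ Set.Icc α 1) → 0 < ∑ j, c j * a j) ↔
      0 < α * ∑ j, a j - (1 - α) * ∑ j, max (-a j) 0 := by
  refine ⟨fun h => ?_, fun h c hc => h.trans_le (sum_mul_sub_sum_max_neg_le_sum_mul a hc)⟩
  obtain ⟨c, hc, hsum⟩ := exists_mem_Icc_sum_mul_eq hα1 a
  exact hsum ▸ h c hc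

end BoxMinimum

section Cones

variable {E : Type*} [NormedAddCommGroup E] [InnerProductSpace ℝ E] {ι : Type*} [Fintype ι]

def weightCone (α : ℝ) (z : ι → E) : Set E :=
  {w | ∃ (lam : ℝ) (c : ι → ℝ), 0 < lam ∧ (∀ i, c i ∈ Set.Icc α 1) ∧ w = lam • ∑ i, c i • z i}

def strictDualCone (z : ι → E) : Set E :=
  {w | ∀ i, (0 : ℝ) < inner ℝ w (z i)}

lemma inner_smul_sum_smul (lam : ℝ) (c : ι → ℝ) (z : ι → E) (v : E) :
    inner ℝ (lam • ∑ j, c j • z j) v = lam * ∑ j, c j * inner ℝ v (z j) := by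
  rw [real_inner_smul_left, sum_inner]
  congr 1
  exact sum_congr rfl fun j _ => by rw [real_inner_smul_left, real_inner_comm]

theorem weightCone_subset_strictDualCone_iff (α : ℝ) (z : ι → E) :
    weightCone α z ⊆ strictDualCone z ↔
      ∀ i, ∀ c : ι → ℝ, (∀ j, c j ∈ Set.Icc α 1) → 0 < ∑ j, c j * inner ℝ (z i) (z j) := by
  constructor
  · intro h i c hc
    have hpos := h ⟨1, c, one_pos, hc, rfl⟩ i
    rwa [inner_smul_sum_smul, one_mul] at hpos
  · rintro h _ ⟨lam, c, hlam, hc, rfl⟩ i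
    rw [inner_smul_sum_smul]
    exact mul_pos hlam (h i c hc)

theorem mean_cone_condition_iff {n : ℕ} (hn : 0 < n) {α : ℝ} (hα : 0 < α) (z : Fin n → E)
    (i : Fin n) :
    ((1 - α) / (n * α)) * ∑ j, max (-inner ℝ (z i) (z j)) 0 <
        inner ℝ ((n : ℝ)⁻¹ • ∑ j, z j) (z i) ↔
      0 < α * ∑ j, inner ℝ (z i) (z j) - (1 - α) * ∑ j, max (-inner ℝ (z i) (z j)) 0 := by
  have hnα : (0 : ℝ) < n * α := mul_pos (Nat.cast_pos.mpr hn) hα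
  have hmean : inner ℝ ((n : ℝ)⁻¹ • ∑ j, z j) (z i) =
      (α * ∑ j, inner ℝ (z i) (z j)) / (n * α) := by
    rw [real_inner_smul_left, sum_inner]
    simp_rw [real_inner_comm (z i)]
    field_simp
  rw [hmean, div_mul_eq_mul_div, div_lt_div_iff_of_pos_right hnα, sub_pos]

end Cones

theorem stmt_12_general (d n : ℕ) (hn : 0 < n)
    (α : ℝ) (hα : 0 < α) (hα1 : α ≤ 1)
    (x : Fin n → EuclideanSpace ℝ (Fin d)) (y : Fin n → ℝ)
    (μ : EuclideanSpace ℝ (Fin d))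
    (hμ : μ = ((n : ℝ)⁻¹) • ∑ i, y i • x i)
    (K intC : Set (EuclideanSpace ℝ (Fin d)))
    (hK : K = {w | ∃ (lam : ℝ) (c : Fin n → ℝ), 0 < lam ∧ (∀ i, c i ∈ Set.Icc α 1) ∧
      w = lam • ∑ i, c i • (y i • x i)})
    (hintC : intC = {w | ∀ i, (0 : ℝ) < inner ℝ w (y i • x i)}) :
    (∀ i, ((1 - α) / (n * α)) *
        ∑ j, max (-(inner ℝ (y i • x i) (y j • x j) : ℝ)) 0 <
        inner ℝ μ (y i • x i)) ↔ K ⊆ intC := by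
  subst hμ hK hintC
  change _ ↔ weightCone α (fun i => y i • x i) ⊆ strictDualCone (fun i => y i • x i)
  rw [weightCone_subset_strictDualCone_iff]
  refine forall_congr' fun i => ?_
  rw [mean_cone_condition_iff hn hα (fun i => y i • x i), forall_mem_Icc_sum_mul_pos_iff hα1]

/-- For a linearly separable dataset, the cone assumption
`⟨μ, y_i x_i⟩ > ((1−α)/(nα)) Σ_j max{−⟨y_i x_i, y_j x_j⟩, 0}` for all `i`
is equivalent to the inclusion `K ⊆ int(C)`, where
`K = {λ Σ_i α_i y_i x_i : α_i ∈ [α,1], λ > 0}` and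
`int(C) = {w : ⟨w, y_i x_i⟩ > 0 ∀i}`. -/
theorem stmt_12 (d n : ℕ) (hn : 0 < n)
    (α : ℝ) (hα : 0 < α) (hα1 : α ≤ 1)
    (x : Fin n → EuclideanSpace ℝ (Fin d)) (y : Fin n → ℝ)
    (hy : ∀ i, y i = 1 ∨ y i = -1)
    (hsep : ∃ v : EuclideanSpace ℝ (Fin d), ∀ i, (1 : ℝ) ≤ y i * inner ℝ v (x i))
    (μ : EuclideanSpace ℝ (Fin d))
    (hμ : μ = ((n : ℝ)⁻¹) • ∑ i, y i • x i)
    (K intC : Set (EuclideanSpace ℝ (Fin d)))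
    (hK : K = {w | ∃ (lam : ℝ) (c : Fin n → ℝ), 0 < lam ∧ (∀ i, c i ∈ Set.Icc α 1) ∧
      w = lam • ∑ i, c i • (y i • x i)})
    (hintC : intC = {w | ∀ i, (0 : ℝ) < inner ℝ w (y i • x i)}) :
    (∀ i, ((1 - α) / (n * α)) *
        ∑ j, max (-(inner ℝ (y i • x i) (y j • x j) : ℝ)) 0 <
        inner ℝ μ (y i • x i)) ↔ K ⊆ intC :=
  stmt_12_general d n hn α hα hα1 x y μ hμ K intC hK hintC
end

section
/- Suppose there exists a unit vector w⋄ with γ⋄ := min_i y_i⟨w⋄, x_i⟩ > 0 such that ( (1/n) Σ_i ‖P⋄ x_i‖ ) / ( α ⟨μ, w⋄⟩ ) < γ⋄ / max_i ‖P⋄ x_i‖, where P⋄ = I − w⋄ w⋄ᵀ and μ = (1/n) Σ_i y_i x_i. Then for all i ∈ [n], ⟨μ, y_i x_i⟩ > ((1−α)/(nα)) Σ_{j∈[n]} max{−⟨y_i x_i, y_j x_j⟩, 0}. -/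
/-!
Write `zⱼ = yⱼ xⱼ` and split each `zⱼ` along the unit vector `w⋄`: `bⱼ = ⟨w⋄, zⱼ⟩ ≥ γ⋄ > 0` and
`pⱼ = ‖P⋄ zⱼ‖ = ‖P⋄ xⱼ‖ ≤ M := maxⱼ pⱼ`. Then `⟨zᵢ, zⱼ⟩ = bᵢ bⱼ + ⟨P⋄ zᵢ, P⋄ zⱼ⟩ ≥ bᵢ bⱼ - pᵢ pⱼ`, so
every negative part `max {-⟨zᵢ, zⱼ⟩, 0}` is at most `M pⱼ`, while `n ⟨μ, zᵢ⟩ ≥ γ⋄ Σ bⱼ - M Σ pⱼ`.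
With `T = Σ pⱼ` and `B = Σ bⱼ = n ⟨μ, w⋄⟩`, the hypothesis reads `M T < α γ⋄ B`, which is exactly
what `(1 - α) M T < α (γ⋄ B - M T)` requires.
-/

open Finset RealInnerProductSpace

section

variable {E : Type*} [NormedAddCommGroup E] [InnerProductSpace ℝ E] {w : E}

theorem inner_eq_inner_mul_inner_add_inner_sub_smul (hw : ‖w‖ = 1) (u v : E) :
    ⟪u, v⟫ = ⟪w, u⟫ * ⟪w, v⟫ + ⟪u - ⟪w, u⟫ • w, v - ⟪w, v⟫ • w⟫ := by
  have hww : ⟪w, w⟫ = 1 := by rw [real_inner_self_eq_norm_sq, hw, one_pow]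
  simp only [inner_sub_left, inner_sub_right, real_inner_smul_left, real_inner_smul_right, hww,
    real_inner_comm u w, real_inner_comm v w]
  ring

theorem inner_mul_inner_sub_norm_mul_norm_le_inner (hw : ‖w‖ = 1) (u v : E) :
    ⟪w, u⟫ * ⟪w, v⟫ - ‖u - ⟪w, u⟫ • w‖ * ‖v - ⟪w, v⟫ • w‖ ≤ ⟪u, v⟫ := by
  rw [inner_eq_inner_mul_inner_add_inner_sub_smul hw u v]
  linarith [neg_le_of_abs_le (abs_real_inner_le_norm (u - ⟪w, u⟫ • w) (v - ⟪w, v⟫ • w))]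

theorem norm_smul_sub_inner_smul (r : ℝ) (u : E) :
    ‖r • u - ⟪w, r • u⟫ • w‖ = |r| * ‖u - ⟪w, u⟫ • w‖ := by
  rw [real_inner_smul_right, mul_smul, ← smul_sub, norm_smul, Real.norm_eq_abs]

theorem max_neg_inner_zero_le (hw : ‖w‖ = 1) {u v : E} (hu : 0 ≤ ⟪w, u⟫) (hv : 0 ≤ ⟪w, v⟫) :
    max (-⟪u, v⟫) 0 ≤ ‖u - ⟪w, u⟫ • w‖ * ‖v - ⟪w, v⟫ • w‖ :=
  max_le (by linarith [inner_mul_inner_sub_norm_mul_norm_le_inner hw u v, mul_nonneg hu hv])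
    (by positivity)

variable {ι : Type*} [Fintype ι] {z : ι → E} {γ M : ℝ}

theorem sum_max_neg_inner_zero_le (hw : ‖w‖ = 1) (hγ : 0 ≤ γ) (hb : ∀ j, γ ≤ ⟪w, z j⟫)
    (hM : ∀ j, ‖z j - ⟪w, z j⟫ • w‖ ≤ M) (i : ι) :
    ∑ j, max (-⟪z i, z j⟫) 0 ≤ M * ∑ j, ‖z j - ⟪w, z j⟫ • w‖ := by
  rw [mul_sum]
  gcongr with j
  exact (max_neg_inner_zero_le hw (hγ.trans (hb i)) (hγ.trans (hb j))).trans
    (mul_le_mul_of_nonneg_right (hM i) (norm_nonneg _))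

theorem mul_sum_inner_sub_mul_sum_norm_le_sum_inner (hw : ‖w‖ = 1) (hγ : 0 ≤ γ)
    (hb : ∀ j, γ ≤ ⟪w, z j⟫) (hM : ∀ j, ‖z j - ⟪w, z j⟫ • w‖ ≤ M) (i : ι) :
    γ * ∑ j, ⟪w, z j⟫ - M * ∑ j, ‖z j - ⟪w, z j⟫ • w‖ ≤ ∑ j, ⟪z j, z i⟫ := by
  rw [mul_sum, mul_sum, ← sum_sub_distrib]
  gcongr with j
  have hbj : 0 ≤ ⟪w, z j⟫ := hγ.trans (hb j)
  calc γ * ⟪w, z j⟫ - M * ‖z j - ⟪w, z j⟫ • w‖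
      ≤ ⟪w, z j⟫ * ⟪w, z i⟫ - ‖z j - ⟪w, z j⟫ • w‖ * ‖z i - ⟪w, z i⟫ • w‖ := by
        have hγb := mul_le_mul_of_nonneg_left (hb i) hbj
        have hpM := mul_le_mul_of_nonneg_left (hM i) (norm_nonneg (z j - ⟪w, z j⟫ • w))
        linarith
    _ ≤ ⟪z j, z i⟫ := inner_mul_inner_sub_norm_mul_norm_le_inner hw _ _

theorem mul_sum_max_neg_inner_zero_lt_sum_inner (hw : ‖w‖ = 1) {α : ℝ} (hα : 0 < α)
    (hα1 : α < 1) (hγ : 0 ≤ γ) (hb : ∀ j, γ ≤ ⟪w, z j⟫)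
    (hM : ∀ j, ‖z j - ⟪w, z j⟫ • w‖ ≤ M)
    (hprincipal : M * ∑ j, ‖z j - ⟪w, z j⟫ • w‖ < α * γ * ∑ j, ⟪w, z j⟫) (i : ι) :
    (1 - α) / α * ∑ j, max (-⟪z i, z j⟫) 0 < ∑ j, ⟪z j, z i⟫ := by
  have hneg := sum_max_neg_inner_zero_le hw hγ hb hM i
  have hlow := mul_sum_inner_sub_mul_sum_norm_le_sum_inner hw hγ hb hM i
  rw [div_mul_eq_mul_div, div_lt_iff₀ hα]
  linarith [mul_le_mul_of_nonneg_left hneg (sub_nonneg.2 hα1.le),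
    mul_le_mul_of_nonneg_left hlow hα.le]

end

theorem mul_lt_of_div_lt_div {c α γ B M T : ℝ} (hc : 0 < c) (hαB : 0 < α * B) (hγ : 0 ≤ γ)
    (hT : 0 ≤ T) (h : c * T / (α * (c * B)) < γ / M) : M * T < α * γ * B := by
  rw [mul_left_comm, mul_div_mul_left _ _ hc.ne'] at h
  have hM : 0 < M := by
    by_contra! hM
    linarith [div_nonneg hT hαB.le, div_nonpos_of_nonneg_of_nonpos hγ hM]
  rw [div_lt_div_iff₀ hαB hM] at h
  linarith

/-- Existence of a principal direction implies the cone assumption: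
if there is a unit vector `w⋄` with margin `γ⋄ > 0` such that
`((1/n) Σ_i ‖P⋄ x_i‖) / (α ⟨μ, w⋄⟩) < γ⋄ / max_i ‖P⋄ x_i‖`, then for all `i`,
`⟨μ, y_i x_i⟩ > ((1−α)/(nα)) Σ_j max{−⟨y_i x_i, y_j x_j⟩, 0}`. -/
theorem stmt_13 (d n : ℕ) (hn : 0 < n)
    (α : ℝ) (hα : 0 < α) (hα1 : α < 1)
    (x : Fin n → EuclideanSpace ℝ (Fin d)) (y : Fin n → ℝ)
    (hy : ∀ i, y i = 1 ∨ y i = -1)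
    (μ : EuclideanSpace ℝ (Fin d))
    (hμ : μ = ((n : ℝ)⁻¹) • ∑ i, y i • x i)
    (wd : EuclideanSpace ℝ (Fin d)) (hwd : ‖wd‖ = 1)
    (P : EuclideanSpace ℝ (Fin d) → EuclideanSpace ℝ (Fin d))
    (hP : ∀ v, P v = v - (inner ℝ wd v : ℝ) • wd)
    (γ : ℝ)
    (hγ : γ = Finset.univ.inf' ⟨⟨0, hn⟩, Finset.mem_univ _⟩
      (fun i => y i * inner ℝ wd (x i)))
    (hγpos : 0 < γ)
    (hprincipal : (((n : ℝ)⁻¹) * ∑ i, ‖P (x i)‖) / (α * inner ℝ μ wd) <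
      γ / Finset.univ.sup' ⟨⟨0, hn⟩, Finset.mem_univ _⟩ (fun i => ‖P (x i)‖)) :
    ∀ i, ((1 - α) / (n * α)) *
        ∑ j, max (-(inner ℝ (y i • x i) (y j • x j) : ℝ)) 0 <
      inner ℝ μ (y i • x i) := by
  intro i
  set z : Fin n → EuclideanSpace ℝ (Fin d) := fun j => y j • x j
  have hn' : (0 : ℝ) < n := by exact_mod_cast hn
  have hb : ∀ j, γ ≤ ⟪wd, z j⟫ := fun j => by
    rw [real_inner_smul_right, hγ]
    exact inf'_le _ (mem_univ j)
  have hPz : ∀ j, ‖z j - ⟪wd, z j⟫ • wd‖ = ‖P (x j)‖ := fun j => by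
    rw [norm_smul_sub_inner_smul, hP]
    rcases hy j with h | h <;> simp [h]
  have hμw : ⟪μ, wd⟫ = (n : ℝ)⁻¹ * ∑ j, ⟪wd, z j⟫ := by
    rw [real_inner_comm, hμ, real_inner_smul_right, inner_sum]
  have hμz : ⟪μ, z i⟫ = (n : ℝ)⁻¹ * ∑ j, ⟪z j, z i⟫ := by
    rw [hμ, real_inner_smul_left, sum_inner]
  have hB : 0 < ∑ j, ⟪wd, z j⟫ :=
    sum_pos (fun j _ => hγpos.trans_le (hb j)) ⟨⟨0, hn⟩, mem_univ _⟩
  rw [hμw] at hprincipal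
  simp only [← hPz] at hprincipal
  have hkey := mul_lt_of_div_lt_div (inv_pos.2 hn') (mul_pos hα hB) hγpos.le
    (sum_nonneg fun j _ => norm_nonneg _) hprincipal
  have hcone := mul_sum_max_neg_inner_zero_lt_sum_inner hwd hα hα1 hγpos.le hb
    (fun j => le_sup' (fun j => ‖z j - ⟪wd, z j⟫ • wd‖) (mem_univ j)) hkey i
  rw [hμz, div_mul_eq_div_div_swap, div_eq_mul_inv _ (n : ℝ), mul_comm _ (n : ℝ)⁻¹, mul_assoc]
  exact mul_lt_mul_of_pos_left hcone (inv_pos.2 hn')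
end
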